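/- Let U_n : ℝ → ℝ (n ∈ ℕ) be twice continuously differentiable, strictly concave, strictly increasing functions whose derivatives U_n' are bijections from ℝ onto (0,∞), such that for each x ∈ ℝ the risk aversion r_n(x) := −U_n''(x)/U_n'(x) tends to ∞ as n → ∞, and suppose there exist x₀ ∈ ℝ and α ∈ (0,∞) with U_n'(x₀) → α as n → ∞. Let I_n : (0,∞) → ℝ denote the inverse of U_n'. Then for each y > 0, I_n(y) → x₀ as n → ∞. -/

import Mathlib

/-!
Since `(log U')' = U''/U' = -r`, we have `log U'(c) = log U'(x₀) - ∫_{x₀}^{c} r`. Concavity makes the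
risk aversion nonnegative, so when it tends to infinity pointwise its integral over any nontrivial
interval tends to infinity (dominated convergence applied to the truncations `min r C`). With
`U_n'(x₀) → α > 0` this forces `U_n'(c) → 0` for `c > x₀` and `U_n'(c) → ∞` for `c < x₀`. As `U_n'` is
decreasing, the point where it takes a fixed value `y > 0` is eventually squeezed between any
`c < x₀` and any `c > x₀`.
-/

open Filter Topology MeasureTheory

noncomputable def riskAversion (U : ℝ → ℝ) (x : ℝ) : ℝ :=
  -deriv (deriv U) x / deriv U x

lemma tendsto_intervalIntegral_atTop_of_tendsto_atTop {ι : Type*} {l : Filter ι}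
    [l.IsCountablyGenerated] {a b : ℝ} (hab : a < b) {r : ι → ℝ → ℝ}
    (hcont : ∀ i, Continuous (r i)) (hnonneg : ∀ i x, 0 ≤ r i x)
    (htend : ∀ x, Tendsto (fun i => r i x) l atTop) :
    Tendsto (fun i => ∫ x in a..b, r i x) l atTop := by
  refine tendsto_atTop.2 fun M => ?_
  set C := (M + 1) / (b - a)
  have hint_C : ∫ _ in a..b, C = M + 1 := by
    rw [intervalIntegral.integral_const, smul_eq_mul]
    exact mul_div_cancel₀ _ (sub_pos.2 hab).ne'
  have htrunc : Tendsto (fun i => ∫ x in a..b, min (r i x) C) l (𝓝 (M + 1)) := by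
    rw [← hint_C]
    refine intervalIntegral.tendsto_integral_filter_of_dominated_convergence (fun _ => |C|)
      (.of_forall fun i => ((hcont i).min continuous_const).aestronglyMeasurable)
      (.of_forall fun i => ae_of_all _ fun x _ => ?_) intervalIntegrable_const
      (ae_of_all _ fun x _ => ?_)
    · rw [Real.norm_eq_abs, abs_le]
      exact ⟨le_min ((neg_nonpos.2 (abs_nonneg C)).trans (hnonneg i x)) (neg_abs_le C),
        (min_le_right _ _).trans (le_abs_self C)⟩
    · exact tendsto_const_nhds.congr' <|
        ((htend x).eventually_ge_atTop C).mono fun i hi => (min_eq_right hi).symm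
  filter_upwards [htrunc.eventually (lt_mem_nhds (lt_add_one M))] with i hi
  refine hi.le.trans <| intervalIntegral.integral_mono_on hab.le
    (((hcont i).min continuous_const).intervalIntegrable a b) ((hcont i).intervalIntegrable a b)
    fun x _ => min_le_left _ _

lemma ConcaveOn.antitone_deriv {U : ℝ → ℝ} (hconc : ConcaveOn ℝ Set.univ U)
    (hU : Differentiable ℝ U) : Antitone (deriv U) :=
  antitoneOn_univ.1 <| hconc.antitoneOn_deriv fun x _ => hU x

lemma riskAversion_nonneg {U : ℝ → ℝ} (hconc : ConcaveOn ℝ Set.univ U) (hU : Differentiable ℝ U)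
    (hpos : ∀ x, 0 < deriv U x) (x : ℝ) : 0 ≤ riskAversion U x :=
  div_nonneg (neg_nonneg.2 (hconc.antitone_deriv hU).deriv_nonpos) (hpos x).le

lemma continuous_riskAversion {U : ℝ → ℝ} (hU : ContDiff ℝ 2 U) (hpos : ∀ x, 0 < deriv U x) :
    Continuous (riskAversion U) :=
  ((hU.deriv' (n := 1)).continuous_deriv le_rfl).neg.div (hU.continuous_deriv one_le_two)
    fun x => (hpos x).ne'

lemma log_deriv_eq_sub_integral_riskAversion {U : ℝ → ℝ} (hU : ContDiff ℝ 2 U)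
    (hpos : ∀ x, 0 < deriv U x) (a b : ℝ) :
    Real.log (deriv U b) = Real.log (deriv U a) - ∫ x in a..b, riskAversion U x := by
  have hU' : ContDiff ℝ 1 (deriv U) := hU.deriv'
  have hftc : ∫ x in a..b, deriv (deriv U) x / deriv U x =
      Real.log (deriv U b) - Real.log (deriv U a) :=
    intervalIntegral.integral_eq_sub_of_hasDerivAt
      (fun x _ => (hU'.differentiable one_ne_zero x).hasDerivAt.log (hpos x).ne')
      (((hU'.continuous_deriv le_rfl).div hU'.continuous fun x => (hpos x).ne').intervalIntegrable a b)
  have hneg : ∫ x in a..b, riskAversion U x = -∫ x in a..b, deriv (deriv U) x / deriv U x := by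
    rw [← intervalIntegral.integral_neg]
    simp only [riskAversion, neg_div]
  linarith

section Limits

variable {ι : Type*} {l : Filter ι} [l.IsCountablyGenerated] {U : ι → ℝ → ℝ} {x₀ α c : ℝ}

lemma tendsto_integral_riskAversion_atTop (hC2 : ∀ i, ContDiff ℝ 2 (U i))
    (hconc : ∀ i, ConcaveOn ℝ Set.univ (U i)) (hpos : ∀ i x, 0 < deriv (U i) x)
    (hra : ∀ x, Tendsto (fun i => riskAversion (U i) x) l atTop) {a b : ℝ} (hab : a < b) :
    Tendsto (fun i => ∫ x in a..b, riskAversion (U i) x) l atTop :=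
  tendsto_intervalIntegral_atTop_of_tendsto_atTop hab
    (fun i => continuous_riskAversion (hC2 i) (hpos i))
    (fun i => riskAversion_nonneg (hconc i) ((hC2 i).differentiable two_ne_zero) (hpos i)) hra

lemma tendsto_deriv_nhds_zero_of_lt (hC2 : ∀ i, ContDiff ℝ 2 (U i))
    (hconc : ∀ i, ConcaveOn ℝ Set.univ (U i)) (hpos : ∀ i x, 0 < deriv (U i) x)
    (hra : ∀ x, Tendsto (fun i => riskAversion (U i) x) l atTop) (hα : 0 < α)
    (hd : Tendsto (fun i => deriv (U i) x₀) l (𝓝 α)) (hc : x₀ < c) :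
    Tendsto (fun i => deriv (U i) c) l (𝓝 0) := by
  have hlog : Tendsto (fun i => Real.log (deriv (U i) c)) l atBot := by
    have hlog₀ := (Real.continuousAt_log hα.ne').tendsto.comp hd
    refine (hlog₀.add_atBot (tendsto_neg_atBot_iff.2
      (tendsto_integral_riskAversion_atTop hC2 hconc hpos hra hc))).congr fun i => ?_
    have := log_deriv_eq_sub_integral_riskAversion (hC2 i) (hpos i) x₀ c
    simp only [Function.comp_apply]
    linarith
  exact (Real.tendsto_exp_atBot.comp hlog).congr fun i => Real.exp_log (hpos i c)

lemma tendsto_deriv_atTop_of_lt (hC2 : ∀ i, ContDiff ℝ 2 (U i))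
    (hconc : ∀ i, ConcaveOn ℝ Set.univ (U i)) (hpos : ∀ i x, 0 < deriv (U i) x)
    (hra : ∀ x, Tendsto (fun i => riskAversion (U i) x) l atTop) (hα : 0 < α)
    (hd : Tendsto (fun i => deriv (U i) x₀) l (𝓝 α)) (hc : c < x₀) :
    Tendsto (fun i => deriv (U i) c) l atTop := by
  have hlog : Tendsto (fun i => Real.log (deriv (U i) c)) l atTop := by
    have hlog₀ := (Real.continuousAt_log hα.ne').tendsto.comp hd
    refine (hlog₀.add_atTop (tendsto_integral_riskAversion_atTop hC2 hconc hpos hra hc)).congr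
      fun i => ?_
    have := log_deriv_eq_sub_integral_riskAversion (hC2 i) (hpos i) c x₀
    simp only [Function.comp_apply]
    linarith
  exact (Real.tendsto_exp_atTop.comp hlog).congr fun i => Real.exp_log (hpos i c)

end Limits

lemma tendsto_of_antitone_of_apply_eq {ι : Type*} {l : Filter ι} {f : ι → ℝ → ℝ} {x : ι → ℝ}
    {x₀ y : ℝ} (hanti : ∀ i, Antitone (f i)) (hx : ∀ i, f i (x i) = y)
    (hleft : ∀ c < x₀, ∀ᶠ i in l, y < f i c) (hright : ∀ c > x₀, ∀ᶠ i in l, f i c < y) :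
    Tendsto x l (𝓝 x₀) := by
  refine tendsto_order.2 ⟨fun c hc => ?_, fun c hc => ?_⟩
  · filter_upwards [hleft c hc] with i hi
    exact (hanti i).reflect_lt (hx i ▸ hi)
  · filter_upwards [hright c hc] with i hi
    exact (hanti i).reflect_lt (hx i ▸ hi)

theorem inverse_marginal_utility_tendsto_general (U : ℕ → ℝ → ℝ)
    (hC2 : ∀ n, ContDiff ℝ 2 (U n))
    (hconc : ∀ n, StrictConcaveOn ℝ Set.univ (U n))
    (hbij : ∀ n, Set.BijOn (deriv (U n)) Set.univ (Set.Ioi (0 : ℝ)))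
    (hra : ∀ x : ℝ,
      Tendsto (fun n => -(deriv (deriv (U n)) x) / deriv (U n) x) atTop atTop)
    (x₀ α : ℝ) (hα : 0 < α)
    (hd : Tendsto (fun n => deriv (U n) x₀) atTop (nhds α))
    (I : ℕ → ℝ → ℝ)
    (hI_right : ∀ n, ∀ y > (0 : ℝ), deriv (U n) (I n y) = y) :
    ∀ y > (0 : ℝ), Tendsto (fun n => I n y) atTop (nhds x₀) := by
  intro y hy
  have hconc' n := (hconc n).concaveOn
  have hpos n x : 0 < deriv (U n) x := (hbij n).mapsTo (Set.mem_univ x)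
  refine tendsto_of_antitone_of_apply_eq
    (fun n => (hconc' n).antitone_deriv ((hC2 n).differentiable two_ne_zero))
    (fun n => hI_right n y hy) (fun c hc => ?_) (fun c hc => ?_)
  · exact (tendsto_deriv_atTop_of_lt hC2 hconc' hpos hra hα hd hc).eventually_gt_atTop y
  · exact (tendsto_deriv_nhds_zero_of_lt hC2 hconc' hpos hra hα hd hc).eventually (gt_mem_nhds hy)

/-- If risk aversions tend to infinity and `deriv (U n) x₀ → α > 0`, the inverses `I n`
of the marginal utilities satisfy `I n y → x₀` for each `y > 0`. -/
theorem inverse_marginal_utility_tendsto (U : ℕ → ℝ → ℝ)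
    (hC2 : ∀ n, ContDiff ℝ 2 (U n))
    (hconc : ∀ n, StrictConcaveOn ℝ Set.univ (U n))
    (hmono : ∀ n, StrictMono (U n))
    (hbij : ∀ n, Set.BijOn (deriv (U n)) Set.univ (Set.Ioi (0 : ℝ)))
    (hra : ∀ x : ℝ,
      Tendsto (fun n => -(deriv (deriv (U n)) x) / deriv (U n) x) atTop atTop)
    (x₀ α : ℝ) (hα : 0 < α)
    (hd : Tendsto (fun n => deriv (U n) x₀) atTop (nhds α))
    (I : ℕ → ℝ → ℝ)
    (hI_right : ∀ n, ∀ y > (0 : ℝ), deriv (U n) (I n y) = y)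
    (hI_left : ∀ n, ∀ x : ℝ, I n (deriv (U n) x) = x) :
    ∀ y > (0 : ℝ), Tendsto (fun n => I n y) atTop (nhds x₀) :=
  inverse_marginal_utility_tendsto_general U hC2 hconc hbij hra x₀ α hα hd I hI_right
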